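/- Let S and Z be closed subspaces of a complex Hilbert space H. Then S ∔ Z = H if and only if S^⊥ ∔ Z^⊥ = H. -/

import Mathlib

/-!
Disjointness of `Sᗮ` and `Zᗮ` is just `Sᗮ ⊓ Zᗮ = (S ⊔ Z)ᗮ`. For `Sᗮ ⊔ Zᗮ = ⊤`, let `P` be the
bounded projection onto `S` along `Z` (bounded by the closed graph theorem, since both are closed).
Every `x` splits as `(x - P† x) + P† x` with `x - P† x ∈ Sᗮ` (as `P` fixes `S`) and `P† x ∈ Zᗮ`
(as `P` kills `Z`). The converse follows by applying this to `Sᗮ, Zᗮ`, as `Kᗮᗮ = K` for closed `K`.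
-/

namespace Submodule

variable {𝕜 E : Type*} [RCLike 𝕜] [NormedAddCommGroup E] [InnerProductSpace 𝕜 E]

theorem disjoint_orthogonal_of_codisjoint {S Z : Submodule 𝕜 E} (h : Codisjoint S Z) :
    Disjoint Sᗮ Zᗮ := by
  rw [disjoint_iff, inf_orthogonal, h.eq_top, top_orthogonal_eq_bot]

theorem IsTopCompl.codisjoint_orthogonal [CompleteSpace E] {S Z : Submodule 𝕜 E}
    (h : S.IsTopCompl Z) : Codisjoint Sᗮ Zᗮ := by
  set Q := ContinuousLinearMap.adjoint (S.projectionL Z h)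
  refine codisjoint_iff.2 (eq_top_iff.2 fun x _ ↦ ?_)
  have hxS : x - Q x ∈ Sᗮ := fun s hs ↦ by
    rw [inner_sub_right, ContinuousLinearMap.adjoint_inner_right,
      projectionL_apply_left h ⟨s, hs⟩, sub_self]
  have hxZ : Q x ∈ Zᗮ := fun z hz ↦ by
    rw [ContinuousLinearMap.adjoint_inner_right, projectionL_apply_right h ⟨z, hz⟩,
      inner_zero_left]
  simpa only [sub_add_cancel] using add_mem_sup hxS hxZ

theorem isCompl_orthogonal_of_isCompl [CompleteSpace E] {S Z : Submodule 𝕜 E}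
    (h : IsCompl S Z) (hS : IsClosed (S : Set E)) (hZ : IsClosed (Z : Set E)) :
    IsCompl Sᗮ Zᗮ :=
  ⟨disjoint_orthogonal_of_codisjoint h.codisjoint,
    (IsCompl.isTopCompl_of_isClosed h hS hZ).codisjoint_orthogonal⟩

end Submodule

theorem isCompl_iff_isCompl_orthogonal {H : Type*} [NormedAddCommGroup H]
    [InnerProductSpace ℂ H] [CompleteSpace H]
    (S Z : Submodule ℂ H) (hS : IsClosed (S : Set H)) (hZ : IsClosed (Z : Set H)) :
    IsCompl S Z ↔ IsCompl Sᗮ Zᗮ := by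
  refine ⟨fun h ↦ Submodule.isCompl_orthogonal_of_isCompl h hS hZ, fun h ↦ ?_⟩
  have : CompleteSpace S := hS.completeSpace_coe
  have : CompleteSpace Z := hZ.completeSpace_coe
  simpa only [Submodule.orthogonal_orthogonal] using
    Submodule.isCompl_orthogonal_of_isCompl h S.isClosed_orthogonal Z.isClosed_orthogonal
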